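/- For all real numbers s1, s2 ≥ 0 and every γ > 0, one has (s1 - s2)(s1^γ - s2^γ) ≥ (4γ/(γ+1)²)·(s1^{(γ+1)/2} - s2^{(γ+1)/2})². -/

import Mathlib

/-!
Put `m = (γ + 1) / 2`. The derivative of `t ^ m` squared is `m² t ^ (γ - 1)`, which is `m² / γ`
times the derivative of `t ^ γ`, so the claim is the Cauchy–Schwarz inequality
`(∫ₐᵇ f')² ≤ (b - a) ∫ₐᵇ f'²` for `f = t ^ m`. It is proved here without integrals: if `f'² ≤ g'`,
then `g - 2λ f + λ² id` has derivative at least `(f' - λ)² ≥ 0`, hence is monotone for every `λ`,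
and the resulting quadratic in `λ` has nonpositive discriminant.
-/

open Set

theorem sq_sub_le_mul_sub_of_sq_deriv_le {f f' g g' : ℝ → ℝ} {a b : ℝ} (hab : a ≤ b)
    (hf : ContinuousOn f (Icc a b)) (hg : ContinuousOn g (Icc a b))
    (hf' : ∀ x ∈ Ioo a b, HasDerivAt f (f' x) x) (hg' : ∀ x ∈ Ioo a b, HasDerivAt g (g' x) x)
    (hfg : ∀ x ∈ Ioo a b, f' x ^ 2 ≤ g' x) :
    (f b - f a) ^ 2 ≤ (b - a) * (g b - g a) := by
  have quadratic_nonneg (t : ℝ) :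
      0 ≤ (b - a) * (t * t) + -2 * (f b - f a) * t + (g b - g a) := by
    have hmono : MonotoneOn (fun x => g x - 2 * t * f x + t ^ 2 * x) (Icc a b) := by
      refine monotoneOn_of_hasDerivWithinAt_nonneg (convex_Icc a b) (by fun_prop)
        (f' := fun x => g' x - 2 * t * f' x + t ^ 2 * 1) ?_ ?_ <;>
        rw [interior_Icc] <;> intro x hx
      · exact (((hg' x hx).sub ((hf' x hx).const_mul (2 * t))).add
          ((hasDerivAt_id x).const_mul (t ^ 2))).hasDerivWithinAt
      · nlinarith [hfg x hx, sq_nonneg (f' x - t)]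
    have := hmono (left_mem_Icc.2 hab) (right_mem_Icc.2 hab) hab
    linarith
  have := discrim_le_zero quadratic_nonneg
  rw [discrim] at this
  linarith

theorem sq_rpow_sub_le {γ a b : ℝ} (hγ : 0 < γ) (hb : 0 ≤ b) (hba : b ≤ a) :
    (a ^ ((γ + 1) / 2) - b ^ ((γ + 1) / 2)) ^ 2 ≤
      (a - b) * (((γ + 1) / 2) ^ 2 / γ * a ^ γ - ((γ + 1) / 2) ^ 2 / γ * b ^ γ) := by
  set m := (γ + 1) / 2
  have hm : 0 < m := by positivity
  refine sq_sub_le_mul_sub_of_sq_deriv_le hba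
    (Real.continuous_rpow_const hm.le).continuousOn
    ((Real.continuous_rpow_const hγ.le).continuousOn.const_smul (m ^ 2 / γ))
    (fun x hx => Real.hasDerivAt_rpow_const (Or.inl (hb.trans_lt hx.1).ne'))
    (fun x hx => (Real.hasDerivAt_rpow_const (Or.inl (hb.trans_lt hx.1).ne')).const_mul _)
    fun x hx => le_of_eq ?_
  have hx₀ : 0 ≤ x := hb.trans hx.1.le
  have hexp : (m - 1) * (2 : ℕ) = γ - 1 := by
    push_cast [m]
    ring
  rw [mul_pow, ← Real.rpow_mul_natCast hx₀, hexp]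
  field_simp

theorem elementary_power_inequality (s1 s2 γ : ℝ) (hs1 : 0 ≤ s1) (hs2 : 0 ≤ s2)
    (hγ : 0 < γ) :
    (s1 - s2) * (s1 ^ γ - s2 ^ γ) ≥
      (4 * γ / (γ + 1) ^ 2) * (s1 ^ ((γ + 1) / 2) - s2 ^ ((γ + 1) / 2)) ^ 2 := by
  wlog h : s2 ≤ s1 generalizing s1 s2
  · linear_combination this s2 s1 hs2 hs1 (le_of_not_ge h)
  have hc : 0 ≤ 4 * γ / (γ + 1) ^ 2 := by positivity
  calc (4 * γ / (γ + 1) ^ 2) * (s1 ^ ((γ + 1) / 2) - s2 ^ ((γ + 1) / 2)) ^ 2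
      ≤ (4 * γ / (γ + 1) ^ 2) *
          ((s1 - s2) * (((γ + 1) / 2) ^ 2 / γ * s1 ^ γ - ((γ + 1) / 2) ^ 2 / γ * s2 ^ γ)) :=
        mul_le_mul_of_nonneg_left (sq_rpow_sub_le hγ hs2 h) hc
    _ = (s1 - s2) * (s1 ^ γ - s2 ^ γ) := by
        field_simp
        ring
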